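/- Let N ∈ ℕ, let Q be a complex invertible matrix, and let F be a complex invertible matrix with F F̄ ∈ ℝ·id. Then the ℤ/2-graded K-theory of the C*-algebras of the following quantum direct products is: for 𝔽 = O⁺(F) × O⁺(F): K₀(C(𝔽)) = ℤ², K₁(C(𝔽)) = ℤ²; for 𝔽 = O⁺(F) × U⁺(Q): K₀ = ℤ³, K₁ = ℤ³; for 𝔽 = O⁺(F) × S_N⁺: K₀ = ℤ^{N²−2N+3}, K₁ = ℤ^{N²−2N+3}; for 𝔽 = U⁺(Q) × U⁺(Q): K₀ = ℤ⁵, K₁ = ℤ⁴; for 𝔽 = U⁺(Q) × S_N⁺: K₀ = ℤ^{N²−2N+4}, K₁ = ℤ^{2N²−4N+5}; for 𝔽 = S_N⁺ × S_N⁺: K₀ = ℤ^{(N²−2N+2)²+1}, K₁ = ℤ^{2(N²−2N+2)}. -/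

import Mathlib

/-!
Abstract framework for separable C*-algebras, Kasparov KK-theory, compact quantum
groups 𝔾 with discrete duals 𝔾̂, their equivariant Kasparov categories KK^𝔾̂,
the complementary pair (𝓛_𝔾̂, 𝓝_𝔾̂) of Meyer–Nest/Arano–Skalski, reduced and
two-sided crossed products, the quantum Baum–Connes assembly map and the Künneth
classes, following R. Martos, "Künneth formulae for quantum direct products".
-/

open CategoryTheory

/-- The degree-`l` part of the graded tensor product of two `ℤ/2`-graded abelian
groups: `⊕_{i+j=l} M_i ⊗ N_j`. -/
noncomputable def grPiece (M N : ZMod 2 → AddCommGrpCat.{0}) (l : ZMod 2) : AddCommGrpCat.{0} :=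
  AddCommGrpCat.of (TensorProduct ℤ (M 0) (N l) × TensorProduct ℤ (M 1) (N (l + 1)))

/-- A `ℤ/2`-graded abelian group is free abelian if each graded piece is a free `ℤ`-module. -/
def FreeGr (M : ZMod 2 → AddCommGrpCat.{0}) : Prop := ∀ i, Module.Free ℤ (M i)

/-- Functoriality of `grPiece` in the first variable. -/
noncomputable def grPieceMap {M M' N : ZMod 2 → AddCommGrpCat.{0}} (f : ∀ i, M i ⟶ M' i)
    (l : ZMod 2) : grPiece M N l ⟶ grPiece M' N l :=
  AddCommGrpCat.ofHom
    (AddMonoidHom.prodMap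
      ((TensorProduct.map (AddMonoidHom.toIntLinearMap (f 0).hom) LinearMap.id).toAddMonoidHom)
      ((TensorProduct.map (AddMonoidHom.toIntLinearMap (f 1).hom) LinearMap.id).toAddMonoidHom))

/-- An abstract framework for Kasparov theory of separable C*-algebras and for
compact/discrete quantum groups, encoding all the constructions used in the paper. -/
structure QFT where
  /-- separable C*-algebras -/
  Alg : Type
  /-- minimal tensor product of C*-algebras -/
  tensor : Alg → Alg → Alg
  /-- the C*-algebra ℂ -/
  CC : Alg
  /-- existence of a *-isomorphism -/
  IsoCStar : Alg → Alg → Prop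
  /-- type I C*-algebras -/
  TypeI : Alg → Prop
  /-- Kasparov `KK`-groups -/
  KK : Alg → Alg → Type
  /-- the identity Kasparov class -/
  kkId : ∀ A, KK A A
  /-- the Kasparov (composition) product -/
  kkComp : ∀ {A B C}, KK A B → KK B C → KK A C
  /-- the external Kasparov product over ℂ -/
  kkExt : ∀ {A A' B B'}, KK A A' → KK B B' → KK (tensor A B) (tensor A' B')
  /-- `ℤ/2`-graded topological K-theory of C*-algebras -/
  K : ZMod 2 → Alg → AddCommGrpCat.{0}
  /-- functoriality of K-theory under Kasparov classes -/
  Kmap : ∀ {A B}, KK A B → ∀ l, K l A ⟶ K l B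
  Kmap_id : ∀ A l, Kmap (kkId A) l = 𝟙 (K l A)
  Kmap_comp : ∀ {A B C} (x : KK A B) (y : KK B C) l,
    Kmap (kkComp x y) l = Kmap x l ≫ Kmap y l
  /-- the external-Kasparov-product pairing `α : K_*(D) ⊗ K_*(B) → K_*(D ⊗ B)` -/
  alpha : ∀ (D B : Alg) (l : ZMod 2),
    grPiece (fun i => K i D) (fun i => K i B) l ⟶ K l (tensor D B)
  /-- the graded torsion product `Tor` of `ℤ/2`-graded abelian groups -/
  torPiece : (ZMod 2 → AddCommGrpCat.{0}) → (ZMod 2 → AddCommGrpCat.{0}) → ZMod 2 → AddCommGrpCat.{0}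
  /-- compact quantum groups -/
  CQG : Type
  /-- the C*-algebra `C(𝔾)` (reduced form) of a compact quantum group -/
  Cof : CQG → Alg
  /-- the quantum direct product `𝔾 × ℍ` -/
  qprod : CQG → CQG → CQG
  /-- `C(𝔾 × ℍ) = C(𝔾) ⊗ C(ℍ)` -/
  Cof_qprod : ∀ G H, Cof (qprod G H) = tensor (Cof G) (Cof H)
  /-- `𝔾̂`-C*-algebras, i.e. the objects of the equivariant Kasparov category `KK^𝔾̂` -/
  DAlg : CQG → Type
  /-- the underlying C*-algebra of a `𝔾̂`-C*-algebra -/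
  dUnder : ∀ {G}, DAlg G → Alg
  /-- the equivariant Kasparov groups `KK^𝔾̂(A,B)` -/
  KKG : ∀ G, DAlg G → DAlg G → Type
  /-- identity in `KK^𝔾̂` -/
  gId : ∀ {G} (A : DAlg G), KKG G A A
  /-- Kasparov product in `KK^𝔾̂` -/
  gComp : ∀ {G} {A B C : DAlg G}, KKG G A B → KKG G B C → KKG G A C
  /-- the suspension functor `Σ` of the triangulated category `KK^𝔾̂` -/
  susp : ∀ {G}, DAlg G → DAlg G
  /-- distinguished (mapping cone) triangles `X → Y → Z → ΣX` of `KK^𝔾̂` -/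
  Dist : ∀ G (X Y Z : DAlg G), KKG G X Y → KKG G Y Z → KKG G Z (susp X) → Prop
  /-- the reduced crossed product `A ⋊_r 𝔾̂` -/
  crossed : ∀ {G}, DAlg G → Alg
  /-- the descent (crossed product) functor `KK^𝔾̂ → KK`, `x ↦ x ⋊_r 𝔾̂` -/
  descent : ∀ {G} {A B : DAlg G}, KKG G A B → KK (crossed A) (crossed B)
  /-- a C*-algebra equipped with the trivial `𝔾̂`-action -/
  trivD : ∀ (G : CQG), Alg → DAlg G
  trivD_under : ∀ G B, dUnder (trivD G B) = B
  /-- `ℂ ⋊_r 𝔾̂ = C(𝔾)` -/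
  crossed_trivC : ∀ G, crossed (trivD G CC) = Cof G
  /-- the exterior tensor product functor `𝒵 : KK^𝔾̂ × KK^ℍ̂ → KK^(𝔾×ℍ)̂` on objects -/
  extD : ∀ {G H}, DAlg G → DAlg H → DAlg (qprod G H)
  /-- the exterior tensor product functor `𝒵` on morphisms -/
  extKKG : ∀ {G H} {A A' : DAlg G} {B B' : DAlg H},
    KKG G A A' → KKG H B B' → KKG (qprod G H) (extD A B) (extD A' B')
  extD_suspR : ∀ {G H} (A : DAlg G) (B : DAlg H), extD A (susp B) = susp (extD A B)
  extD_suspL : ∀ {G H} (A : DAlg G) (B : DAlg H), extD (susp A) B = susp (extD A B)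
  /-- `A ⊗ B` with the given action on `A` and the trivial `𝔾̂`-action on `B` -/
  tensTrivD : ∀ {G}, DAlg G → Alg → DAlg G
  /-- functoriality of `(-) ⊗ B` on `KK^𝔾̂` -/
  tensTrivKKG : ∀ {G} {A A' : DAlg G}, KKG G A A' → ∀ B : Alg,
    KKG G (tensTrivD A B) (tensTrivD A' B)
  tensTrivD_susp : ∀ {G} (A : DAlg G) (B : Alg), tensTrivD (susp A) B = susp (tensTrivD A B)
  /-- the canonical Kasparov class implementing `(A ⋊_r 𝔾̂) ⊗ (B ⋊_r ℍ̂) ≅ (A⊗B) ⋊_r (𝔾×ℍ)̂` -/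
  kappa : ∀ {G H} (A : DAlg G) (B : DAlg H),
    KK (tensor (crossed A) (crossed B)) (crossed (extD A B))
  /-- the canonical Kasparov class implementing `(A ⋊_r 𝔾̂) ⊗ B ≅ (A⊗B) ⋊_r 𝔾̂`
  for `B` with the trivial action -/
  kappaTriv : ∀ {G} (A : DAlg G) (B : Alg),
    KK (tensor (crossed A) B) (crossed (tensTrivD A B))
  /-- torsion actions of `𝔾`: finite-dimensional ergodic `𝔾`-C*-algebras -/
  TorAct : CQG → Type
  /-- the reduced crossed product `T ⋊_r 𝔾` of a torsion action -/
  torCross : ∀ {G}, TorAct G → Alg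
  /-- the localizing subcategory `𝓛_𝔾̂` of `KK^𝔾̂` generated by the objects
  `C ⊗ (T ⋊_r 𝔾)` with `C` separable and `T` a torsion action of `𝔾` -/
  LSub : ∀ G, Set (DAlg G)
  /-- the complementary subcategory `𝓝_𝔾̂ = 𝓛_𝔾̂^⊣` -/
  NSub : ∀ G, Set (DAlg G)
  /-- the generators `C ⊗ (T ⋊_r 𝔾)` of `𝓛_𝔾̂` -/
  genObj : ∀ {G}, Alg → TorAct G → DAlg G
  gen_mem : ∀ {G} (C : Alg) (Tt : TorAct G), genObj C Tt ∈ LSub G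
  /-- `𝓝_𝔾̂` consists of the objects right-orthogonal to `𝓛_𝔾̂`: `KK^𝔾̂(L, A) ≅ 0` -/
  NSub_orth : ∀ G (A : DAlg G), A ∈ NSub G ↔ ∀ L ∈ LSub G, Subsingleton (KKG G L A)
  /-- the functor `L` (the `𝓛_𝔾̂`-simplicial approximation) of the complementary pair -/
  LFun : ∀ {G}, DAlg G → DAlg G
  /-- the functor `N` of the complementary pair -/
  NFun : ∀ {G}, DAlg G → DAlg G
  LFun_mem : ∀ {G} (A : DAlg G), LFun A ∈ LSub G
  NFun_mem : ∀ {G} (A : DAlg G), NFun A ∈ NSub G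
  /-- the Dirac homomorphism `u : L(A) → A` -/
  dirac : ∀ {G} (A : DAlg G), KKG G (LFun A) A
  /-- the morphism `A → N(A)` of the `(𝓛_𝔾̂, 𝓝_𝔾̂)`-triangle -/
  toN : ∀ {G} (A : DAlg G), KKG G A (NFun A)
  /-- the connecting morphism `N(A) → Σ L(A)` of the `(𝓛_𝔾̂, 𝓝_𝔾̂)`-triangle -/
  conn : ∀ {G} (A : DAlg G), KKG G (NFun A) (susp (LFun A))
  /-- the `(𝓛_𝔾̂, 𝓝_𝔾̂)`-triangle `L(A) → A → N(A) → ΣL(A)` is distinguished -/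
  can_dist : ∀ {G} (A : DAlg G), Dist G (LFun A) A (NFun A) (dirac A) (toN A) (conn A)
  /-- the canonical Kasparov class `ψ_B ∈ KK^𝔾̂(L(A) ⊗ B, L(A ⊗ B))` -/
  psiCan : ∀ {G} (A : DAlg G) (B : Alg), KKG G (tensTrivD (LFun A) B) (LFun (tensTrivD A B))
  /-- right `𝔾`-C*-algebras -/
  CAlgR : CQG → Type
  /-- left `𝔾`-C*-algebras -/
  CAlgL : CQG → Type
  /-- the underlying C*-algebra of a right `𝔾`-C*-algebra -/
  rUnder : ∀ {G}, CAlgR G → Alg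
  /-- the two-sided crossed product `B ⋊_r 𝔾 ⋉_r A` -/
  twoCross : ∀ {G}, CAlgR G → CAlgL G → Alg
  /-- exterior tensor product of right actions over the quantum direct product -/
  extR : ∀ {G H}, CAlgR G → CAlgR H → CAlgR (qprod G H)
  /-- exterior tensor product of left actions over the quantum direct product -/
  extL : ∀ {G H}, CAlgL G → CAlgL H → CAlgL (qprod G H)
  /-- `A ⊗ B` with the trivial right `𝔾`-action on the second factor -/
  tensTrivR : ∀ {G}, CAlgR G → Alg → CAlgR G
  /-- `T ↦ T^op` with its canonical left `𝔾`-action, for a torsion action `T` -/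
  torOp : ∀ {G}, TorAct G → CAlgL G
  /-- the localisation functor `L̂` of the complementary pair `(𝓛̂_𝔾̂, 𝓝̂_𝔾̂)` in `KK^𝔾` -/
  Lhat : ∀ {G}, CAlgR G → CAlgR G

namespace QFT

variable (T : QFT)

/-- invertibility of a Kasparov class -/
def KKInv {A B : T.Alg} (f : T.KK A B) : Prop :=
  ∃ g : T.KK B A, T.kkComp f g = T.kkId A ∧ T.kkComp g f = T.kkId B

/-- invertibility of an equivariant Kasparov class -/
def KKGInv {G : T.CQG} {A B : T.DAlg G} (f : T.KKG G A B) : Prop :=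
  ∃ g : T.KKG G B A, T.gComp f g = T.gId A ∧ T.gComp g f = T.gId B

/-- isomorphism in the equivariant Kasparov category `KK^𝔾̂` -/
def IsoKKG {G : T.CQG} (A B : T.DAlg G) : Prop := ∃ f : T.KKG G A B, T.KKGInv f

/-- `𝔾̂` satisfies the strong quantum Baum–Connes property: `KK^𝔾̂ = 𝓛_𝔾̂` -/
def StrongBC (G : T.CQG) : Prop := ∀ A : T.DAlg G, A ∈ T.LSub G

/-- the quantum Baum–Connes assembly map `η^𝔾̂_A = K_*(u ⋊_r 𝔾̂)` in degree `l` -/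
noncomputable def eta {G : T.CQG} (A : T.DAlg G) (l : ZMod 2) :
    T.K l (T.crossed (T.LFun A)) ⟶ T.K l (T.crossed A) :=
  T.Kmap (T.descent (T.dirac A)) l

/-- `𝔾̂` satisfies the quantum Baum–Connes property with coefficients in `A` -/
def BCwith {G : T.CQG} (A : T.DAlg G) : Prop := ∀ l, IsIso (T.eta A l)

/-- membership in the Künneth class `𝒩`: the external product
`K_*(D) ⊗ K_*(B) → K_*(D ⊗ B)` is an isomorphism whenever `K_*(B)` is free abelian -/
def InN (D : T.Alg) : Prop :=
  ∀ B : T.Alg, FreeGr (fun i => T.K i B) → ∀ l, IsIso (T.alpha D B l)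

/-- the equivariant Künneth map
`α_𝔾̂ : K_*(L(A) ⋊_r 𝔾̂) ⊗ K_*(B) → K_*(L(A ⊗ B) ⋊_r 𝔾̂)`, the composite of the
external product with the identification induced by `ψ_B ⋊_r 𝔾̂` -/
noncomputable def alphaG {G : T.CQG} (A : T.DAlg G) (B : T.Alg) (l : ZMod 2) :
    grPiece (fun i => T.K i (T.crossed (T.LFun A))) (fun i => T.K i B) l ⟶
      T.K l (T.crossed (T.LFun (T.tensTrivD A B))) :=
  T.alpha (T.crossed (T.LFun A)) B l ≫ T.Kmap (T.kappaTriv (T.LFun A) B) l ≫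
    T.Kmap (T.descent (T.psiCan A B)) l

/-- membership in the equivariant Künneth class `𝒩_𝔾̂`: the equivariant Künneth map
`α_𝔾̂` is an isomorphism whenever `K_*(B)` is free abelian -/
def InNG {G : T.CQG} (A : T.DAlg G) : Prop :=
  ∀ B : T.Alg, FreeGr (fun i => T.K i B) → ∀ l, IsIso (T.alphaG A B l)

end QFT

/-- The framework enriched with the standard examples of compact quantum groups:
the `q`-deformations `SU_q(2)`, the free orthogonal quantum groups `O⁺(F)`, the
free unitary quantum groups `U⁺(Q)` and the quantum permutation groups `S_N⁺`,
whose discrete duals satisfy the strong quantum Baum–Connes property by the work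
of Voigt and Vergnioux–Voigt. -/
structure QFTX extends QFT where
  /-- the `q`-deformation `SU_q(2)`, `q ∈ [-1,1] \ {0}` -/
  SUq : ℝ → CQG
  /-- the free orthogonal quantum group `O⁺(F)` -/
  Oplus : ∀ {n : ℕ}, Matrix (Fin n) (Fin n) ℂ → CQG
  /-- the free unitary quantum group `U⁺(Q)` -/
  Uplus : ∀ {n : ℕ}, Matrix (Fin n) (Fin n) ℂ → CQG
  /-- the quantum permutation group `S_N⁺` -/
  Splus : ℕ → CQG
  /-- `SU_q(2)^` satisfies the strong quantum Baum–Connes property (Voigt) -/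
  SUq_strongBC : ∀ q : ℝ, q ∈ Set.Icc (-1 : ℝ) 1 → q ≠ 0 → QFT.StrongBC toQFT (SUq q)
  /-- `O⁺(F)^` satisfies the strong quantum Baum–Connes property (Voigt),
  for `F` invertible with `F F̄ ∈ ℝ·id` -/
  Oplus_strongBC : ∀ {n : ℕ} (F : Matrix (Fin n) (Fin n) ℂ), IsUnit F →
    (∃ c : ℝ, F * F.map (starRingEnd ℂ) = (c : ℂ) • 1) → QFT.StrongBC toQFT (Oplus F)
  /-- `U⁺(Q)^` satisfies the strong quantum Baum–Connes property (Vergnioux–Voigt),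
  for `Q` invertible -/
  Uplus_strongBC : ∀ {n : ℕ} (Q : Matrix (Fin n) (Fin n) ℂ), IsUnit Q →
    QFT.StrongBC toQFT (Uplus Q)
  /-- `S_N⁺^` satisfies the strong quantum Baum–Connes property (Voigt) -/
  Splus_strongBC : ∀ N : ℕ, QFT.StrongBC toQFT (Splus N)

namespace QFTX

/-- the `ℤ/2`-graded K-theory of the C*-algebra `C(𝔾)` of a compact quantum group -/
noncomputable def Kc (T : QFTX) (l : ZMod 2) (G : T.toQFT.CQG) : AddCommGrpCat.{0} :=
  T.toQFT.K l (T.toQFT.Cof G)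

end QFTX

/-!
The K-groups of `C(O⁺(F))`, `C(U⁺(Q))` and `C(S_N⁺)` are free of finite rank, so for `C(𝔾) ∈ 𝒩`
the Künneth map `⊕_{i+j=l} K_i(C(𝔾)) ⊗ K_j(C(ℍ)) → K_l(C(𝔾) ⊗ C(ℍ)) = K_l(C(𝔾 × ℍ))` is an
isomorphism. Since `ℤ^a ⊗ ℤ^c ≅ ℤ^(ac)`, factors of ranks `(a, b)` and `(c, d)` in degrees
`(0, 1)` give ranks `ac + bd` and `ad + bc`, and the six cases are arithmetic.
-/

open scoped TensorProduct

noncomputable def finTensorFinAddEquiv (a b : ℕ) :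
    (Fin a → ℤ) ⊗[ℤ] (Fin b → ℤ) ≃+ (Fin (a * b) → ℤ) :=
  (((Pi.basisFun ℤ _).tensorProduct (Pi.basisFun ℤ _)).reindex finProdFinEquiv).equivFun.toAddEquiv

noncomputable def finProdFinAddEquiv (a b : ℕ) :
    ((Fin a → ℤ) × (Fin b → ℤ)) ≃+ (Fin (a + b) → ℤ) :=
  (((Pi.basisFun ℤ _).prod (Pi.basisFun ℤ _)).reindex finSumFinEquiv).equivFun.toAddEquiv

theorem nonempty_addEquiv_fin_one {M : Type*} [AddCommGroup M] (h : Nonempty (M ≃+ ℤ)) :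
    Nonempty (M ≃+ (Fin 1 → ℤ)) :=
  h.map (·.trans (AddEquiv.funUnique (Fin 1) ℤ).symm)

noncomputable def grPieceAddEquivFin {M N : ZMod 2 → AddCommGrpCat.{0}} {l : ZMod 2}
    {a b c d : ℕ} (e₀ : M 0 ≃+ (Fin a → ℤ)) (e₁ : M 1 ≃+ (Fin b → ℤ))
    (f : N l ≃+ (Fin c → ℤ)) (f' : N (l + 1) ≃+ (Fin d → ℤ)) :
    grPiece M N l ≃+ (Fin (a * c + b * d) → ℤ) :=
  (((TensorProduct.congr e₀.toIntLinearEquiv f.toIntLinearEquiv).toAddEquiv.trans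
      (finTensorFinAddEquiv a c)).prodCongr
    ((TensorProduct.congr e₁.toIntLinearEquiv f'.toIntLinearEquiv).toAddEquiv.trans
      (finTensorFinAddEquiv b d))).trans (finProdFinAddEquiv _ _)

theorem freeGr_of_addEquiv_fin {M : ZMod 2 → AddCommGrpCat.{0}} {a b : ℕ}
    (e₀ : M 0 ≃+ (Fin a → ℤ)) (e₁ : M 1 ≃+ (Fin b → ℤ)) : FreeGr M := by
  intro i
  fin_cases i
  · exact Module.Free.of_equiv e₀.symm.toIntLinearEquiv
  · exact Module.Free.of_equiv e₁.symm.toIntLinearEquiv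

namespace QFT

theorem InN.nonempty_K_tensor_addEquiv_fin {T : QFT} {A B : T.Alg} (hA : T.InN A)
    {a b c d : ℕ} (e₀ : T.K 0 A ≃+ (Fin a → ℤ)) (e₁ : T.K 1 A ≃+ (Fin b → ℤ))
    (f₀ : T.K 0 B ≃+ (Fin c → ℤ)) (f₁ : T.K 1 B ≃+ (Fin d → ℤ)) :
    Nonempty (T.K 0 (T.tensor A B) ≃+ (Fin (a * c + b * d) → ℤ)) ∧
      Nonempty (T.K 1 (T.tensor A B) ≃+ (Fin (a * d + b * c) → ℤ)) := by
  have hB := hA B (freeGr_of_addEquiv_fin f₀ f₁)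
  have α (l : ZMod 2) := haveI := hB l; (asIso (T.alpha A B l)).addCommGroupIsoToAddEquiv.symm
  -- in degree 1 the second summand is `K_1 ⊗ K_(1+1)`, and `(1 + 1 : ZMod 2)` reduces to `0`
  exact ⟨⟨(α 0).trans (grPieceAddEquivFin e₀ e₁ f₀ f₁)⟩,
    ⟨(α 1).trans (grPieceAddEquivFin e₀ e₁ f₁ f₀)⟩⟩

end QFT

theorem QFTX.nonempty_Kc_qprod_addEquiv_fin (T : QFTX) {G H : T.CQG}
    (hG : T.InN (T.Cof G)) {a b c d k₀ k₁ : ℕ}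
    (e₀ : Nonempty (T.Kc 0 G ≃+ (Fin a → ℤ))) (e₁ : Nonempty (T.Kc 1 G ≃+ (Fin b → ℤ)))
    (f₀ : Nonempty (T.Kc 0 H ≃+ (Fin c → ℤ))) (f₁ : Nonempty (T.Kc 1 H ≃+ (Fin d → ℤ)))
    (h₀ : a * c + b * d = k₀) (h₁ : a * d + b * c = k₁) :
    Nonempty (T.Kc 0 (T.qprod G H) ≃+ (Fin k₀ → ℤ)) ∧
      Nonempty (T.Kc 1 (T.qprod G H) ≃+ (Fin k₁ → ℤ)) := by
  obtain ⟨e₀⟩ := e₀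
  obtain ⟨e₁⟩ := e₁
  obtain ⟨f₀⟩ := f₀
  obtain ⟨f₁⟩ := f₁
  subst h₀ h₁
  rw [Kc, Kc, T.Cof_qprod]
  exact hG.nonempty_K_tensor_addEquiv_fin e₀ e₁ f₀ f₁

theorem K_theory_of_quantum_direct_products_general (T : QFTX) (N : ℕ) {n m : ℕ}
    (F : Matrix (Fin n) (Fin n) ℂ)
    (Q : Matrix (Fin m) (Fin m) ℂ)
    (hO0 : Nonempty (T.Kc 0 (T.Oplus F) ≃+ ℤ))
    (hO1 : Nonempty (T.Kc 1 (T.Oplus F) ≃+ ℤ))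
    (hU0 : Nonempty (T.Kc 0 (T.Uplus Q) ≃+ ℤ))
    (hU1 : Nonempty (T.Kc 1 (T.Uplus Q) ≃+ (Fin 2 → ℤ)))
    (hS0 : Nonempty (T.Kc 0 (T.Splus N) ≃+ (Fin (N ^ 2 - 2 * N + 2) → ℤ)))
    (hS1 : Nonempty (T.Kc 1 (T.Splus N) ≃+ ℤ))
    (hON : T.toQFT.InN (T.toQFT.Cof (T.Oplus F)))
    (hUN : T.toQFT.InN (T.toQFT.Cof (T.Uplus Q)))
    (hSN : T.toQFT.InN (T.toQFT.Cof (T.Splus N))) :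
    (Nonempty (T.Kc 0 (T.toQFT.qprod (T.Oplus F) (T.Oplus F)) ≃+ (Fin 2 → ℤ))
      ∧ Nonempty (T.Kc 1 (T.toQFT.qprod (T.Oplus F) (T.Oplus F)) ≃+ (Fin 2 → ℤ)))
    ∧ (Nonempty (T.Kc 0 (T.toQFT.qprod (T.Oplus F) (T.Uplus Q)) ≃+ (Fin 3 → ℤ))
      ∧ Nonempty (T.Kc 1 (T.toQFT.qprod (T.Oplus F) (T.Uplus Q)) ≃+ (Fin 3 → ℤ)))
    ∧ (Nonempty (T.Kc 0 (T.toQFT.qprod (T.Oplus F) (T.Splus N)) ≃+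
          (Fin (N ^ 2 - 2 * N + 3) → ℤ))
      ∧ Nonempty (T.Kc 1 (T.toQFT.qprod (T.Oplus F) (T.Splus N)) ≃+
          (Fin (N ^ 2 - 2 * N + 3) → ℤ)))
    ∧ (Nonempty (T.Kc 0 (T.toQFT.qprod (T.Uplus Q) (T.Uplus Q)) ≃+ (Fin 5 → ℤ))
      ∧ Nonempty (T.Kc 1 (T.toQFT.qprod (T.Uplus Q) (T.Uplus Q)) ≃+ (Fin 4 → ℤ)))
    ∧ (Nonempty (T.Kc 0 (T.toQFT.qprod (T.Uplus Q) (T.Splus N)) ≃+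
          (Fin (N ^ 2 - 2 * N + 4) → ℤ))
      ∧ Nonempty (T.Kc 1 (T.toQFT.qprod (T.Uplus Q) (T.Splus N)) ≃+
          (Fin (2 * N ^ 2 - 4 * N + 5) → ℤ)))
    ∧ (Nonempty (T.Kc 0 (T.toQFT.qprod (T.Splus N) (T.Splus N)) ≃+
          (Fin ((N ^ 2 - 2 * N + 2) ^ 2 + 1) → ℤ))
      ∧ Nonempty (T.Kc 1 (T.toQFT.qprod (T.Splus N) (T.Splus N)) ≃+
          (Fin (2 * (N ^ 2 - 2 * N + 2)) → ℤ))) := by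
  replace hO0 := nonempty_addEquiv_fin_one hO0
  replace hO1 := nonempty_addEquiv_fin_one hO1
  replace hU0 := nonempty_addEquiv_fin_one hU0
  replace hS1 := nonempty_addEquiv_fin_one hS1
  refine ⟨T.nonempty_Kc_qprod_addEquiv_fin hON hO0 hO1 hO0 hO1 ?_ ?_,
    T.nonempty_Kc_qprod_addEquiv_fin hON hO0 hO1 hU0 hU1 ?_ ?_,
    T.nonempty_Kc_qprod_addEquiv_fin hON hO0 hO1 hS0 hS1 ?_ ?_,
    T.nonempty_Kc_qprod_addEquiv_fin hUN hU0 hU1 hU0 hU1 ?_ ?_,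
    T.nonempty_Kc_qprod_addEquiv_fin hUN hU0 hU1 hS0 hS1 ?_ ?_,
    T.nonempty_Kc_qprod_addEquiv_fin hSN hS0 hS1 hS0 hS1 ?_ ?_⟩
  all_goals first | omega | ring

/-- Let `N ∈ ℕ`, `Q` a complex invertible matrix and `F` a
complex invertible matrix with `F F̄ ∈ ℝ·id`. Given the K-theory computations of
Voigt and Vergnioux–Voigt for the factors (`K₀(C(O⁺(F))) = ℤ = K₁(C(O⁺(F)))`,
`K₀(C(U⁺(Q))) = ℤ`, `K₁(C(U⁺(Q))) = ℤ²`, `K₀(C(S_N⁺)) = ℤ^{N²−2N+2}`,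
`K₁(C(S_N⁺)) = ℤ`) and the fact that these C*-algebras lie in the Künneth class
`𝒩`, the `ℤ/2`-graded K-theory of the quantum direct products is:
`𝔽 = O⁺(F) × O⁺(F)`: `K₀ = ℤ²`, `K₁ = ℤ²`; `𝔽 = O⁺(F) × U⁺(Q)`: `K₀ = ℤ³`,
`K₁ = ℤ³`; `𝔽 = O⁺(F) × S_N⁺`: `K₀ = ℤ^{N²−2N+3}`, `K₁ = ℤ^{N²−2N+3}`;
`𝔽 = U⁺(Q) × U⁺(Q)`: `K₀ = ℤ⁵`, `K₁ = ℤ⁴`; `𝔽 = U⁺(Q) × S_N⁺`: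
`K₀ = ℤ^{N²−2N+4}`, `K₁ = ℤ^{2N²−4N+5}`; `𝔽 = S_N⁺ × S_N⁺`:
`K₀ = ℤ^{(N²−2N+2)²+1}`, `K₁ = ℤ^{2(N²−2N+2)}`. -/
theorem K_theory_of_quantum_direct_products (T : QFTX) (N : ℕ) {n m : ℕ}
    (F : Matrix (Fin n) (Fin n) ℂ) (hF : IsUnit F)
    (hFc : ∃ c : ℝ, F * F.map (starRingEnd ℂ) = (c : ℂ) • 1)
    (Q : Matrix (Fin m) (Fin m) ℂ) (hQ : IsUnit Q)
    (hO0 : Nonempty (T.Kc 0 (T.Oplus F) ≃+ ℤ))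
    (hO1 : Nonempty (T.Kc 1 (T.Oplus F) ≃+ ℤ))
    (hU0 : Nonempty (T.Kc 0 (T.Uplus Q) ≃+ ℤ))
    (hU1 : Nonempty (T.Kc 1 (T.Uplus Q) ≃+ (Fin 2 → ℤ)))
    (hS0 : Nonempty (T.Kc 0 (T.Splus N) ≃+ (Fin (N ^ 2 - 2 * N + 2) → ℤ)))
    (hS1 : Nonempty (T.Kc 1 (T.Splus N) ≃+ ℤ))
    (hON : T.toQFT.InN (T.toQFT.Cof (T.Oplus F)))
    (hUN : T.toQFT.InN (T.toQFT.Cof (T.Uplus Q)))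
    (hSN : T.toQFT.InN (T.toQFT.Cof (T.Splus N))) :
    (Nonempty (T.Kc 0 (T.toQFT.qprod (T.Oplus F) (T.Oplus F)) ≃+ (Fin 2 → ℤ))
      ∧ Nonempty (T.Kc 1 (T.toQFT.qprod (T.Oplus F) (T.Oplus F)) ≃+ (Fin 2 → ℤ)))
    ∧ (Nonempty (T.Kc 0 (T.toQFT.qprod (T.Oplus F) (T.Uplus Q)) ≃+ (Fin 3 → ℤ))
      ∧ Nonempty (T.Kc 1 (T.toQFT.qprod (T.Oplus F) (T.Uplus Q)) ≃+ (Fin 3 → ℤ)))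
    ∧ (Nonempty (T.Kc 0 (T.toQFT.qprod (T.Oplus F) (T.Splus N)) ≃+
          (Fin (N ^ 2 - 2 * N + 3) → ℤ))
      ∧ Nonempty (T.Kc 1 (T.toQFT.qprod (T.Oplus F) (T.Splus N)) ≃+
          (Fin (N ^ 2 - 2 * N + 3) → ℤ)))
    ∧ (Nonempty (T.Kc 0 (T.toQFT.qprod (T.Uplus Q) (T.Uplus Q)) ≃+ (Fin 5 → ℤ))
      ∧ Nonempty (T.Kc 1 (T.toQFT.qprod (T.Uplus Q) (T.Uplus Q)) ≃+ (Fin 4 → ℤ)))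
    ∧ (Nonempty (T.Kc 0 (T.toQFT.qprod (T.Uplus Q) (T.Splus N)) ≃+
          (Fin (N ^ 2 - 2 * N + 4) → ℤ))
      ∧ Nonempty (T.Kc 1 (T.toQFT.qprod (T.Uplus Q) (T.Splus N)) ≃+
          (Fin (2 * N ^ 2 - 4 * N + 5) → ℤ)))
    ∧ (Nonempty (T.Kc 0 (T.toQFT.qprod (T.Splus N) (T.Splus N)) ≃+
          (Fin ((N ^ 2 - 2 * N + 2) ^ 2 + 1) → ℤ))
      ∧ Nonempty (T.Kc 1 (T.toQFT.qprod (T.Splus N) (T.Splus N)) ≃+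
          (Fin (2 * (N ^ 2 - 2 * N + 2)) → ℤ))) :=
  K_theory_of_quantum_direct_products_general T N F Q hO0 hO1 hU0 hU1 hS0 hS1 hON hUN hSN
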